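/- arXiv:2407.19317 — 2 statements merged into one kernel-verified Lean document; each statement's English description precedes it below -/
import Mathlib

section
/- Let A be a finite (commutative unital) local ring and n ≥ 1 odd. Then the number r_n(A) of roots of K_n over A satisfies r_n(A)·|A ∖ A^×| = |A|^n − |A^×|·w, where w is the number of (n+2)-tuples (b_1,…,b_{n+2}) ∈ A^{n+2} with M_{n+2}(b_1,…,b_{n+2}) = Id. -/
/-- Continuants: `K₀ = 1`, `K₁(x₁) = x₁`,
`Kₙ(x₁,…,xₙ) = xₙ·K_{n-1}(x₁,…,x_{n-1}) − K_{n-2}(x₁,…,x_{n-2})`. -/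
def cont {A : Type} [CommRing A] : (n : ℕ) → (Fin n → A) → A
  | 0, _ => 1
  | 1, a => a 0
  | n+2, a => a (Fin.last (n+1)) * cont (n+1) (fun i => a i.castSucc)
      - cont n (fun i => a i.castSucc.castSucc)

/-- `Mₙ(a₁,…,aₙ) = [[aₙ,−1],[1,0]]·[[a_{n−1},−1],[1,0]]⋯[[a₁,−1],[1,0]]`. -/
def Mn {A : Type} [CommRing A] : (n : ℕ) → (Fin n → A) → Matrix (Fin 2) (Fin 2) A
  | 0, _ => 1
  | n+1, a => !![a (Fin.last n), -1; 1, 0] * Mn n (fun i => a i.castSucc)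

section Aux

variable {A : Type} [CommRing A]

lemma Mn_det : ∀ (n : ℕ) (a : Fin n → A), (Mn n a).det = 1
  | 0, a => by simp [Mn]
  | n+1, a => by
    rw [Mn, Matrix.det_mul, Mn_det n]
    simp [Matrix.det_fin_two_of]

lemma Mn_row1 (n : ℕ) (a : Fin (n+1) → A) :
    Mn (n+1) a 1 0 = Mn n (fun i => a i.castSucc) 0 0 ∧
      Mn (n+1) a 1 1 = Mn n (fun i => a i.castSucc) 0 1 := by
  rw [Mn]
  constructor <;> simp [Matrix.mul_apply, Fin.sum_univ_two]

lemma Mn_00 : ∀ (n : ℕ) (a : Fin n → A), Mn n a 0 0 = cont n a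
  | 0, a => by simp [Mn, cont]
  | 1, a => by
    simp [Mn, cont, Matrix.mul_apply, Fin.sum_univ_two]
  | n+2, a => by
    rw [cont, ← Mn_00 (n+1), ← Mn_00 n]
    rw [Mn, Matrix.mul_apply, Fin.sum_univ_two]
    have := (Mn_row1 n (fun i => a i.castSucc)).1
    rw [show (fun i : Fin n => a i.castSucc.castSucc)
        = (fun i : Fin n => (fun j : Fin (n+1) => a j.castSucc) i.castSucc) from rfl, ← this]
    simp [sub_eq_add_neg]

lemma Mn_snoc (n : ℕ) (r : Fin n → A) (x : A) :
    Mn (n+1) (Fin.snoc r x) = !![x, -1; 1, 0] * Mn n r := by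
  have h1 : (fun i : Fin n => (Fin.snoc r x : Fin (n+1) → A) i.castSucc) = r := by
    funext i; simp
  rw [Mn, Fin.snoc_last, h1]

lemma cont_snoc (n : ℕ) (r : Fin n → A) (x : A) :
    cont (n+1) (Fin.snoc r x) = x * Mn n r 0 0 - Mn n r 1 0 := by
  rw [← Mn_00 (n+1), Mn_snoc]
  simp [Matrix.mul_apply, Fin.sum_univ_two, sub_eq_add_neg]

lemma matrix_helper (p q r s x y : A) (hd : p * s - q * r = 1) :
    !![y, -1; 1, 0] * (!![x, -1; 1, 0] * !![p, q; r, s]) = 1 ↔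
      (p = -1 ∧ x = -r ∧ y = q) := by
  rw [show (1 : Matrix (Fin 2) (Fin 2) A) = !![1,0;0,1] from (Matrix.one_fin_two)]
  simp only [Matrix.mul_fin_two, ← Matrix.ext_iff, Fin.forall_fin_two,
    Matrix.cons_val', Matrix.cons_val_zero, Matrix.cons_val_one, Matrix.head_cons,
    Matrix.head_fin_const, Matrix.empty_val', Matrix.cons_val_fin_one, Matrix.of_apply]
  constructor
  · rintro ⟨⟨h1, h2⟩, h3, h4⟩
    have e1 : p = -1 := by linear_combination y * h3 - h1
    refine ⟨e1, ?_, ?_⟩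
    · linear_combination (-1 : A) * h3 + x * e1
    · linear_combination h2 - y * h4
  · rintro ⟨h1, h2, h3⟩
    subst h1 h2 h3
    refine ⟨⟨?_, ?_⟩, ?_, ?_⟩
    · linear_combination (0 : A) * hd
    · linear_combination y * hd
    · linear_combination (0 : A) * hd
    · linear_combination hd

lemma Mn_one_iff (n : ℕ) (a : Fin n → A) (x y : A) :
    Mn (n+2) (Fin.snoc (Fin.snoc a x) y) = 1 ↔
      (cont n a = -1 ∧ x = -(Mn n a 1 0) ∧ y = Mn n a 0 1) := by
  rw [Mn_snoc, Mn_snoc, ← Mn_00 n a]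
  have hd := Mn_det n a
  rw [Matrix.det_fin_two] at hd
  have h := matrix_helper (Mn n a 0 0) (Mn n a 0 1) (Mn n a 1 0) (Mn n a 1 1) x y hd
  rwa [← Matrix.eta_fin_two (Mn n a)] at h

/-- scaling map -/
def scl {n : ℕ} (c : Aˣ) (a : Fin n → A) : Fin n → A :=
  fun i => (if (i : ℕ) % 2 = 0 then (c : A) else ((c⁻¹ : Aˣ) : A)) * a i

lemma scl_castSucc (c : Aˣ) {n : ℕ} (a : Fin (n+1) → A) :
    (fun i : Fin n => scl c a i.castSucc) = scl c (fun i => a i.castSucc) := by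
  funext i; simp [scl]

lemma scl_scl {n : ℕ} (c e : Aˣ) (a : Fin n → A) :
    scl c (scl e a) = scl (c * e) a := by
  funext i
  simp only [scl]
  split <;> push_cast [mul_inv_rev] <;> ring

lemma scl_one {n : ℕ} (a : Fin n → A) : scl 1 a = a := by
  funext i; simp [scl]

lemma cont_scl : ∀ (n : ℕ) (c : Aˣ) (a : Fin n → A),
    cont n (scl c a) = (c : A) ^ (n % 2) * cont n a
  | 0, c, a => by simp [cont]
  | 1, c, a => by simp [cont, scl]
  | n+2, c, a => by
    have h2 : (fun i : Fin n => scl c a i.castSucc.castSucc)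
        = scl c (fun i => a i.castSucc.castSucc) := by
      funext i; simp [scl]
    rw [cont, cont, scl_castSucc, h2, cont_scl (n+1), cont_scl n]
    have hlast : scl c a (Fin.last (n+1))
        = (if (n+1) % 2 = 0 then (c : A) else ((c⁻¹ : Aˣ) : A)) * a (Fin.last (n+1)) := by
      simp [scl]
    rw [hlast]
    rcases Nat.even_or_odd n with he | ho
    · have e0 : n % 2 = 0 := Nat.even_iff.mp he
      have e1 : (n+1) % 2 = 1 := by omega
      have e2 : (n+2) % 2 = 0 := by omega
      rw [e0, e1, e2]
      have hinv : ((c⁻¹ : Aˣ) : A) * (c : A) = 1 := c.inv_mul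
      simp only [if_neg (by omega : ¬ (1 = 0)), pow_one, pow_zero]
      linear_combination (a (Fin.last (n+1)) * cont (n+1) (fun i => a i.castSucc)) * hinv
    · have e0 : n % 2 = 1 := Nat.odd_iff.mp ho
      have e1 : (n+1) % 2 = 0 := by omega
      have e2 : (n+2) % 2 = 1 := by omega
      rw [e0, e1, e2]
      norm_num
      ring

/-- splitting off the last coordinate -/
def eSnoc {n : ℕ} : (Fin (n+1) → A) ≃ ((Fin n → A) × A) where
  toFun a := (Fin.init a, a (Fin.last n))
  invFun p := Fin.snoc p.1 p.2
  left_inv a := Fin.snoc_init_self a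
  right_inv p := by simp

/-- splitting off the last two coordinates -/
def eSnoc2 {n : ℕ} : (((Fin n → A) × A) × A) ≃ (Fin (n+2) → A) where
  toFun q := Fin.snoc (Fin.snoc q.1.1 q.1.2) q.2
  invFun b := ((Fin.init (Fin.init b), Fin.init b (Fin.last n)), b (Fin.last (n+1)))
  left_inv := by rintro ⟨⟨a, x⟩, y⟩; simp
  right_inv b := by simp [Fin.snoc_init_self]

lemma eSnoc2_apply {n : ℕ} (q : ((Fin n → A) × A) × A) :
    (eSnoc2 q : Fin (n+2) → A) = Fin.snoc (Fin.snoc q.1.1 q.1.2) q.2 := rfl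

end Aux



section Steps

variable {A : Type} [CommRing A] [IsLocalRing A] [Finite A]

lemma stepA' (k : ℕ) : Nat.card {t : Fin (k+1) → A // ¬ IsUnit (cont (k+1) t)}
    = Nat.card {t : Fin (k+1) → A // cont (k+1) t = 0}
        * Nat.card {x : A // ¬IsUnit x} := by
  classical
  have : Fintype A := Fintype.ofFinite A
  have hcop : ∀ r : Fin k → A, IsUnit (Mn k r 0 0) ∨ IsUnit (Mn k r 1 0) := by
    intro r
    have hd := Mn_det k r
    rw [Matrix.det_fin_two] at hd
    have h1 : Mn k r 0 0 * Mn k r 1 1 + (-(Mn k r 0 1)) * Mn k r 1 0 = 1 := by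
      linear_combination hd
    rcases IsLocalRing.isUnit_or_isUnit_of_add_one h1 with h | h
    · exact Or.inl (isUnit_of_mul_isUnit_left h)
    · exact Or.inr (isUnit_of_mul_isUnit_right h)
  have eq1 : ∀ (P : A → Prop),
      Nat.card {t : Fin (k+1) → A // P (cont (k+1) t)}
        = ∑ r : Fin k → A, Nat.card {x : A // P (x * Mn k r 0 0 - Mn k r 1 0)} := by
    intro P
    have e : {t : Fin (k+1) → A // P (cont (k+1) t)}
        ≃ Σ r : Fin k → A, {x : A // P (x * Mn k r 0 0 - Mn k r 1 0)} := by
      refine (Equiv.subtypeEquiv (eSnoc : (Fin (k+1) → A) ≃ _) ?_).trans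
        (Equiv.subtypeProdEquivSigmaSubtype
          (fun (r : Fin k → A) (x : A) => P (x * Mn k r 0 0 - Mn k r 1 0)))
      intro a
      have h : cont (k+1) a
          = a (Fin.last k) * Mn k (Fin.init a) 0 0 - Mn k (Fin.init a) 1 0 := by
        rw [← cont_snoc, Fin.snoc_init_self]
      rw [h]
      exact Iff.rfl
    rw [Nat.card_congr e, Nat.card_eq_fintype_card, Fintype.card_sigma]
    refine Finset.sum_congr rfl fun r _ => ?_
    rw [Nat.card_eq_fintype_card]
  have A1 : Nat.card {t : Fin (k+1) → A // ¬ IsUnit (cont (k+1) t)}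
      = ∑ r : Fin k → A, Nat.card {x : A // ¬ IsUnit (x * Mn k r 0 0 - Mn k r 1 0)} :=
    eq1 (fun y => ¬ IsUnit y)
  have A2 : Nat.card {t : Fin (k+1) → A // cont (k+1) t = 0}
      = ∑ r : Fin k → A, Nat.card {x : A // x * Mn k r 0 0 - Mn k r 1 0 = 0} :=
    eq1 (fun y => y = 0)
  rw [A1, A2, Finset.sum_mul]
  refine Finset.sum_congr rfl fun r _ => ?_
  by_cases hu : IsUnit (Mn k r 0 0)
  · have aff : ∀ (P : A → Prop),
        Nat.card {x : A // P (x * Mn k r 0 0 - Mn k r 1 0)}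
          = Nat.card {y : A // P y} := by
      intro P
      refine Nat.card_congr (Equiv.subtypeEquiv
        ⟨fun x => x * Mn k r 0 0 - Mn k r 1 0,
         fun y => (y + Mn k r 1 0) * ((hu.unit⁻¹ : Aˣ) : A), ?_, ?_⟩
        fun x => Iff.rfl)
      · intro x
        have h : (hu.unit : A) = Mn k r 0 0 := hu.unit_spec
        have huu : ((hu.unit⁻¹ : Aˣ) : A) * (hu.unit : A) = 1 :=
          hu.unit.inv_mul
        show _ = _
        linear_combination x * huu - x * ((hu.unit⁻¹ : Aˣ) : A) * h
      · intro y
        have h : (hu.unit : A) = Mn k r 0 0 := hu.unit_spec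
        have huu : ((hu.unit⁻¹ : Aˣ) : A) * (hu.unit : A) = 1 :=
          hu.unit.inv_mul
        show _ = _
        linear_combination (y + Mn k r 1 0) * huu
          - (y + Mn k r 1 0) * ((hu.unit⁻¹ : Aˣ) : A) * h
    have B1 : Nat.card {x : A // ¬ IsUnit (x * Mn k r 0 0 - Mn k r 1 0)}
        = Nat.card {y : A // ¬ IsUnit y} := aff (fun y => ¬ IsUnit y)
    have B2 : Nat.card {x : A // x * Mn k r 0 0 - Mn k r 1 0 = 0}
        = Nat.card {y : A // y = 0} := aff (fun y => y = 0)
    rw [B1, B2]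
    have h0 : Nat.card {y : A // y = (0:A)} = 1 := by
      rw [Nat.card_eq_fintype_card, Fintype.card_eq_one_iff]
      exact ⟨⟨0, rfl⟩, by rintro ⟨y, rfl⟩; rfl⟩
    rw [h0, one_mul]
  · have hdu : IsUnit (Mn k r 1 0) := (hcop r).resolve_left hu
    have h1 : Nat.card {x : A // ¬IsUnit (x * Mn k r 0 0 - Mn k r 1 0)} = 0 := by
      rw [Nat.card_eq_zero]
      left
      constructor
      rintro ⟨x, hx⟩
      have hxc : ¬ IsUnit (x * Mn k r 0 0) := fun h => hu (isUnit_of_mul_isUnit_right h)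
      have hneg : -(x * Mn k r 0 0 - Mn k r 1 0) ∈ nonunits A := by
        rw [mem_nonunits_iff, IsUnit.neg_iff]
        exact hx
      have hsum := IsLocalRing.nonunits_add (mem_nonunits_iff.mpr hxc) hneg
      have h3 : x * Mn k r 0 0 + -(x * Mn k r 0 0 - Mn k r 1 0) = Mn k r 1 0 := by ring
      rw [h3, mem_nonunits_iff] at hsum
      exact hsum hdu
    have h2 : Nat.card {x : A // x * Mn k r 0 0 - Mn k r 1 0 = 0} = 0 := by
      rw [Nat.card_eq_zero]
      left
      constructor
      rintro ⟨x, hx⟩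
      have h4 : x * Mn k r 0 0 = Mn k r 1 0 := sub_eq_zero.mp hx
      rw [← h4] at hdu
      exact hu (isUnit_of_mul_isUnit_right hdu)
    rw [h1, h2, zero_mul]

lemma stepB' (k : ℕ) (hm1 : (k + 1) % 2 = 1) :
    Nat.card {t : Fin (k+1) → A // IsUnit (cont (k+1) t)}
      = Nat.card Aˣ * Nat.card {t : Fin (k+1) → A // cont (k+1) t = -1} := by
  classical
  have : Fintype A := Fintype.ofFinite A
  have e1 : {t : Fin (k+1) → A // IsUnit (cont (k+1) t)}
      ≃ Σ u : Aˣ, {t : Fin (k+1) → A // cont (k+1) t = ↑u} :=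
    { toFun := fun t => ⟨t.2.unit, ⟨t.1, t.2.unit_spec.symm⟩⟩
      invFun := fun p => ⟨p.2.1, by rw [p.2.2]; exact p.1.isUnit⟩
      left_inv := fun t => Subtype.ext rfl
      right_inv := fun p => Sigma.subtype_ext
        (Units.ext (by simp [IsUnit.unit_spec, p.2.2])) rfl }
  have e2 : ∀ u : Aˣ, {t : Fin (k+1) → A // cont (k+1) t = ↑u}
      ≃ {t : Fin (k+1) → A // cont (k+1) t = -1} := by
    intro u
    refine { toFun := fun t => ⟨scl (-u⁻¹) t.1, ?_⟩
             invFun := fun t => ⟨scl (-u) t.1, ?_⟩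
             left_inv := fun t => Subtype.ext ?_
             right_inv := fun t => Subtype.ext ?_ }
    · rw [cont_scl, hm1, pow_one, t.2]
      push_cast
      rw [neg_mul, Units.inv_mul]
    · rw [cont_scl, hm1, pow_one, t.2]
      push_cast
      ring
    · show scl (-u) (scl (-u⁻¹) t.1) = t.1
      rw [scl_scl, show (-u) * (-u⁻¹) = 1 by simp, scl_one]
    · show scl (-u⁻¹) (scl (-u) t.1) = t.1
      rw [scl_scl, show (-u⁻¹) * (-u) = 1 by simp, scl_one]
  rw [Nat.card_congr e1, Nat.card_eq_fintype_card, Fintype.card_sigma]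
  have h : ∀ u : Aˣ, Fintype.card {t : Fin (k+1) → A // cont (k+1) t = ↑u}
      = Nat.card {t : Fin (k+1) → A // cont (k+1) t = -1} := fun u => by
    rw [← Nat.card_eq_fintype_card, Nat.card_congr (e2 u)]
  simp only [h, Finset.sum_const, Finset.card_univ, smul_eq_mul,
    Nat.card_eq_fintype_card]

lemma stepC' (k : ℕ) : Nat.card {b : Fin (k+1+2) → A // Mn (k+1+2) b = 1}
    = Nat.card {t : Fin (k+1) → A // cont (k+1) t = -1} := by
  classical
  refine Nat.card_congr ?_
  have E1 : {q : ((Fin (k+1) → A) × A) × A //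
        Mn (k+1+2) (Fin.snoc (Fin.snoc q.1.1 q.1.2) q.2) = 1}
      ≃ {b : Fin (k+1+2) → A // Mn (k+1+2) b = 1} :=
    Equiv.subtypeEquiv (eSnoc2 (n := k+1)) fun q => by rw [eSnoc2_apply]
  have E2 : {q : ((Fin (k+1) → A) × A) × A //
        Mn (k+1+2) (Fin.snoc (Fin.snoc q.1.1 q.1.2) q.2) = 1}
      ≃ {q : ((Fin (k+1) → A) × A) × A // cont (k+1) q.1.1 = -1 ∧
          q.1.2 = -(Mn (k+1) q.1.1 1 0) ∧ q.2 = Mn (k+1) q.1.1 0 1} :=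
    Equiv.subtypeEquivRight fun q => Mn_one_iff (k+1) q.1.1 q.1.2 q.2
  have E3 : {q : ((Fin (k+1) → A) × A) × A // cont (k+1) q.1.1 = -1 ∧
          q.1.2 = -(Mn (k+1) q.1.1 1 0) ∧ q.2 = Mn (k+1) q.1.1 0 1}
      ≃ {t : Fin (k+1) → A // cont (k+1) t = -1} :=
    { toFun := fun q => ⟨q.1.1.1, q.2.1⟩
      invFun := fun t => ⟨((t.1, -(Mn (k+1) t.1 1 0)), Mn (k+1) t.1 0 1),
        ⟨t.2, rfl, rfl⟩⟩
      left_inv := by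
        rintro ⟨⟨⟨a, x⟩, y⟩, h1, h2, h3⟩
        dsimp only at h2 h3
        subst h2; subst h3
        rfl
      right_inv := fun t => rfl }
  exact E1.symm.trans (E2.trans E3)

lemma stepD' (k : ℕ) :
    Nat.card {t : Fin (k+1) → A // IsUnit (cont (k+1) t)}
      + Nat.card {t : Fin (k+1) → A // ¬ IsUnit (cont (k+1) t)}
      = Nat.card A ^ (k+1) := by
  classical
  have : Fintype A := Fintype.ofFinite A
  rw [Nat.card_eq_fintype_card, Nat.card_eq_fintype_card, Nat.card_eq_fintype_card,
    ← Fintype.card_sum]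
  rw [Fintype.card_congr (Equiv.sumCompl (fun t : Fin (k+1) → A => IsUnit (cont (k+1) t)))]
  rw [Fintype.card_fun, Fintype.card_fin]

end Steps

/-- Over a finite local ring, for odd :
, where  is the number of roots of
 and  11:45:33 up 5 min,  0 user,  load average: 0.31, 0.22, 0.09
USER     TTY      FROM             LOGIN@   IDLE   JCPU   PCPU WHAT is the number of -tuples  with . -/
theorem card_roots_odd {A : Type} [CommRing A] [IsLocalRing A] [Finite A]
    (n : ℕ) (hn : 1 ≤ n) (hodd : Odd n) :
    ((Nat.card {t : Fin n → A // cont n t = 0} *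
        Nat.card {x : A // ¬IsUnit x} : ℕ) : ℤ) =
      (Nat.card A : ℤ) ^ n -
        (Nat.card Aˣ : ℤ) *
          (Nat.card {b : Fin (n + 2) → A // Mn (n + 2) b = 1} : ℤ) := by
  obtain ⟨k, rfl⟩ : ∃ k, n = k + 1 := ⟨n - 1, by omega⟩
  have hm1 : (k + 1) % 2 = 1 := Nat.odd_iff.mp hodd
  have key := stepD' (A := A) k
  rw [stepA' k, stepB' k hm1, ← stepC' k] at key
  have hcast := congrArg (fun x : ℕ => (x : ℤ)) key
  push_cast at hcast ⊢
  linarith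
end

section
/- For every prime power q and every n ≥ 1, the number of n-tuples (a_1,…,a_n) ∈ F_q^n with K_n(a_1,…,a_n) = 0 equals (q^n + (−1)^{n+1})/(q+1). -/
lemma cont_snoc_s17 {A : Type} [CommRing A] (n : ℕ) (s : Fin (n+1) → A) (a : A) :
    cont (n+2) (Fin.snoc s a) = a * cont (n+1) s - cont n (fun i => s i.castSucc) := by
  show (Fin.snoc s a : Fin (n+2) → A) (Fin.last (n+1)) * _ - _ = _
  simp [Fin.snoc_last, Fin.snoc_castSucc]

lemma cont_prev_ne {A : Type} [Field A] :
    ∀ (n : ℕ) (a : Fin (n+1) → A), cont (n+1) a = 0 →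
      cont n (fun i => a i.castSucc) ≠ 0 := by
  intro n
  induction n with
  | zero => intro a _; simp [cont]
  | succ m ih =>
    intro a h hc
    have h2 : cont m (fun i => a i.castSucc.castSucc) = 0 := by
      have : cont (m+2) a = a (Fin.last (m+1)) * cont (m+1) (fun i => a i.castSucc)
          - cont m (fun i => a i.castSucc.castSucc) := rfl
      rw [this, hc] at h
      linear_combination -h
    exact ih (fun i => a i.castSucc) hc h2

noncomputable def contEquiv (F : Type) [Field F] (n : ℕ) :
    {t : Fin (n+2) → F // cont (n+2) t = 0} ≃ {s : Fin (n+1) → F // cont (n+1) s ≠ 0} where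
  toFun t := ⟨fun i => t.1 i.castSucc, by
    intro hc
    have h := t.2
    have h2 : cont n (fun i => t.1 i.castSucc.castSucc) = 0 := by
      have : cont (n+2) t.1 = t.1 (Fin.last (n+1)) * cont (n+1) (fun i => t.1 i.castSucc)
          - cont n (fun i => t.1 i.castSucc.castSucc) := rfl
      rw [this, hc] at h
      linear_combination -h
    exact cont_prev_ne n (fun i => t.1 i.castSucc) hc h2⟩
  invFun s := ⟨Fin.snoc s.1 (cont n (fun i => s.1 i.castSucc) / cont (n+1) s.1), by
    rw [cont_snoc_s17, div_mul_cancel₀ _ s.2, sub_self]⟩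
  left_inv t := by
    have h := t.2
    have hne : cont (n+1) (fun i => t.1 i.castSucc) ≠ 0 := by
      intro hc
      have h2 : cont n (fun i => t.1 i.castSucc.castSucc) = 0 := by
        have : cont (n+2) t.1 = t.1 (Fin.last (n+1)) * cont (n+1) (fun i => t.1 i.castSucc)
            - cont n (fun i => t.1 i.castSucc.castSucc) := rfl
        rw [this, hc] at h
        linear_combination -h
      exact cont_prev_ne n (fun i => t.1 i.castSucc) hc h2
    ext1
    show Fin.snoc _ _ = t.1
    have hlast : cont n (fun i => t.1 i.castSucc.castSucc) / cont (n+1) (fun i => t.1 i.castSucc)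
        = t.1 (Fin.last (n+1)) := by
      rw [div_eq_iff hne]
      have : cont (n+2) t.1 = t.1 (Fin.last (n+1)) * cont (n+1) (fun i => t.1 i.castSucc)
          - cont n (fun i => t.1 i.castSucc.castSucc) := rfl
      rw [this] at h
      linear_combination -h
    rw [hlast]
    exact Fin.snoc_init_self t.1
  right_inv s := by
    ext1
    funext i
    show (Fin.snoc s.1 _ : Fin (n+2) → F) i.castSucc = s.1 i
    exact Fin.snoc_castSucc _ _ i

lemma card_step (F : Type) [Field F] [Fintype F] (n : ℕ) :
    Nat.card {t : Fin (n+2) → F // cont (n+2) t = 0}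
      + Nat.card {s : Fin (n+1) → F // cont (n+1) s = 0}
      = Fintype.card F ^ (n+1) := by
  classical
  rw [Nat.card_congr (contEquiv F n)]
  rw [Nat.card_eq_fintype_card, Nat.card_eq_fintype_card]
  rw [Fintype.card_subtype_compl (p := fun s : Fin (n+1) → F => cont (n+1) s = 0)]
  have hle : Fintype.card {s : Fin (n+1) → F // cont (n+1) s = 0}
      ≤ Fintype.card (Fin (n+1) → F) := Fintype.card_subtype_le _
  rw [Fintype.card_fun] at *
  simp only [Fintype.card_fin] at *
  omega

/-- Over any finite field (of cardinality `q`, a prime power), for `n ≥ 1`,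
the number of roots of the continuant `Kₙ` equals `(qⁿ + (−1)^{n+1})/(q+1)`,
stated multiplied through by `q + 1`. -/
theorem card_cont_roots_finite_field (F : Type) [Field F] [Fintype F]
    (n : ℕ) (hn : 1 ≤ n) :
    ((Fintype.card F : ℤ) + 1) *
        (Nat.card {t : Fin n → F // cont n t = 0} : ℤ) =
      (Fintype.card F : ℤ) ^ n + (-1) ^ (n + 1) := by
  induction n with
  | zero => omega
  | succ m ih =>
    cases m with
    | zero =>
      have : Nat.card {t : Fin 1 → F // cont 1 t = 0} = 1 := by
        rw [Nat.card_eq_one_iff_unique]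
        constructor
        · constructor
          intro a b
          ext1
          funext i
          have hi : i = 0 := Subsingleton.elim _ _
          subst hi
          have ha : a.1 0 = 0 := a.2
          have hb : b.1 0 = 0 := b.2
          rw [ha, hb]
        · exact ⟨⟨fun _ => 0, rfl⟩⟩
      rw [this]
      ring
    | succ k =>
      have hrec := card_step F k
      have ihk := ih (by omega)
      have : (Nat.card {t : Fin (k+2) → F // cont (k+2) t = 0} : ℤ)
          = (Fintype.card F : ℤ) ^ (k+1) - Nat.card {s : Fin (k+1) → F // cont (k+1) s = 0} := by
        have := congrArg (fun x : ℕ => (x : ℤ)) hrec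
        push_cast at this
        linarith
      rw [this]
      linear_combination -ihk
end
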